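/- For every real θ with |θ| < π one has limsup_{r→∞} log|ξ₁(r e^{iθ})| / (√r log r) ≤ (1/4) cos(θ/2); in other words, for |θ| < π, log|ξ₁(r e^{iθ})| ≤ (1/4)√r (log r) cos(θ/2) + o(√r log r) as r → ∞. -/

import Mathlib

open scoped Real

/-- The Riemann ξ-function: `ξ(s) = (1/2) s (s-1) π^(-s/2) Γ(s/2) ζ(s)`. -/
noncomputable def riemannXiFn (s : ℂ) : ℂ :=
  (1 / 2) * s * (s - 1) * (π : ℂ) ^ (-s / 2) * Complex.Gamma (s / 2) * riemannZeta s

/-!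
On the ray, `ξ₁(r e^{iθ}) = ξ(w)` with `w = √r e^{iθ/2} + 1/2`, and
`Re w = √r cos(θ/2) + 1/2 → ∞` because `|θ| < π`. Once `Re w ≥ 4`, the factor `π^{-w/2}` has
modulus at most `1`, `|ζ(w)| ≤ ζ(2) < 2`, and `|Γ(w/2)| ≤ Γ(Re w / 2) ≤ (Re w / 2)^{Re w / 2}`, so
`log |ξ(w)| ≤ (Re w / 2) log √r + O(log r) = (1/4) √r cos(θ/2) log r + O(log r)`.
-/

open Filter Real

namespace Complex

theorem norm_Gamma_le_Gamma_re {z : ℂ} (hz : 0 < z.re) :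
    ‖Gamma z‖ ≤ Real.Gamma z.re := by
  rw [Gamma_eq_integral hz, Real.Gamma_eq_integral hz, GammaIntegral]
  refine (MeasureTheory.norm_integral_le_integral_norm _).trans_eq ?_
  refine MeasureTheory.setIntegral_congr_fun measurableSet_Ioi fun x hx => ?_
  rw [norm_mul, norm_cpow_eq_rpow_re_of_pos hx, norm_real, Real.norm_eq_abs,
    abs_of_nonneg (Real.exp_pos _).le, sub_re, one_re]

end Complex

theorem Real.Gamma_le_rpow_self {x : ℝ} (hx : 2 ≤ x) : Real.Gamma x ≤ x ^ x := by
  set n := ⌊x⌋₊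
  have hnx : (n : ℝ) ≤ x := Nat.floor_le (by linarith)
  have hn : (2 : ℝ) ≤ n := by exact_mod_cast Nat.le_floor (by exact_mod_cast hx)
  calc Real.Gamma x ≤ Real.Gamma (n + 1) :=
        Real.Gamma_strictMonoOn_Ici.monotoneOn hx (by simp only [Set.mem_Ici]; linarith)
          (Nat.lt_floor_add_one x).le
    _ = n.factorial := Real.Gamma_nat_eq_factorial n
    _ ≤ n ^ n := by exact_mod_cast Nat.factorial_le_pow n
    _ = n ^ (n : ℝ) := (rpow_natCast _ _).symm
    _ ≤ x ^ (n : ℝ) := by gcongr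
    _ ≤ x ^ x := rpow_le_rpow_of_exponent_le (by linarith) hnx

theorem norm_riemannZeta_le_two {s : ℂ} (hs : 2 ≤ s.re) : ‖riemannZeta s‖ ≤ 2 := by
  have hterm (n : ℕ) : ‖LSeries.term 1 s n‖ ≤ 1 / (n : ℝ) ^ 2 := by
    refine (LSeries.norm_term_le_of_re_le_re 1 (s := 2) (by simpa using hs) n).trans_eq ?_
    rw [LSeries.norm_term_eq]
    split_ifs with hn <;> simp [hn]
  calc ‖riemannZeta s‖ = ‖LSeries 1 s‖ := by rw [LSeries_one_eq_riemannZeta (by linarith)]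
    _ ≤ π ^ 2 / 6 := tsum_of_norm_bounded hasSum_zeta_two hterm
    _ ≤ 2 := by nlinarith [pi_lt_d2, pi_pos]

theorem norm_riemannXiFn_le {w : ℂ} (hw : 2 ≤ w.re) :
    ‖riemannXiFn w‖ ≤ ‖w‖ * ‖w - 1‖ * Real.Gamma (w.re / 2) := by
  have hpi : ‖(π : ℂ) ^ (-w / 2)‖ ≤ 1 := by
    rw [Complex.norm_cpow_eq_rpow_re_of_pos pi_pos]
    refine rpow_le_one_of_one_le_of_nonpos (by linarith [pi_gt_three]) ?_
    simp only [Complex.div_ofNat_re, Complex.neg_re]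
    linarith
  have hGamma : ‖Complex.Gamma (w / 2)‖ ≤ Real.Gamma (w.re / 2) := by
    simpa only [Complex.div_ofNat_re] using
      Complex.norm_Gamma_le_Gamma_re (z := w / 2) (by rw [Complex.div_ofNat_re]; linarith)
  have hGamma0 : 0 ≤ Real.Gamma (w.re / 2) := (Real.Gamma_pos_of_pos (by linarith)).le
  calc ‖riemannXiFn w‖
      = 1 / 2 * (‖w‖ * ‖w - 1‖) * ‖(π : ℂ) ^ (-w / 2)‖ * ‖Complex.Gamma (w / 2)‖ *
          ‖riemannZeta w‖ := by
        rw [riemannXiFn]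
        simp only [norm_mul, norm_div, norm_one, Complex.norm_ofNat]
        ring
    _ ≤ 1 / 2 * (‖w‖ * ‖w - 1‖) * 1 * Real.Gamma (w.re / 2) * 2 := by
        gcongr
        exact norm_riemannZeta_le_two hw
    _ = ‖w‖ * ‖w - 1‖ * Real.Gamma (w.re / 2) := by ring

theorem log_norm_riemannXiFn_le {w : ℂ} {q : ℝ} (hw : 4 ≤ w.re) (hw0 : ‖w‖ ≤ 2 * q)
    (hw1 : ‖w - 1‖ ≤ 2 * q) :
    log ‖riemannXiFn w‖ ≤ log 4 + (2 + w.re / 2) * log q := by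
  have hxq : w.re / 2 ≤ q := by linarith [Complex.re_le_norm w]
  have hq : 0 < q := by linarith
  have hbound : ‖riemannXiFn w‖ ≤ 4 * q ^ (2 + w.re / 2) := by
    calc ‖riemannXiFn w‖ ≤ ‖w‖ * ‖w - 1‖ * Real.Gamma (w.re / 2) :=
          norm_riemannXiFn_le (by linarith)
      _ ≤ (2 * q) * (2 * q) * (w.re / 2) ^ (w.re / 2) := by
        gcongr
        exact Real.Gamma_le_rpow_self (by linarith)
      _ ≤ (2 * q) * (2 * q) * q ^ (w.re / 2) := by gcongr
      _ = 4 * q ^ (2 + w.re / 2) := by rw [rpow_add hq, rpow_two]; ring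
  have hlog : log (4 * q ^ (2 + w.re / 2)) = log 4 + (2 + w.re / 2) * log q := by
    rw [log_mul (by norm_num) (by positivity), log_rpow hq]
  rcases (norm_nonneg (riemannXiFn w)).eq_or_lt with h | h
  · rw [← h, log_zero, ← hlog]
    have hpow : 1 ≤ q ^ (2 + w.re / 2) := one_le_rpow (by linarith) (by linarith)
    exact log_nonneg (by linarith)
  · exact hlog ▸ log_le_log h hbound

theorem log_norm_riemannXiFn_ray_le {q θ : ℝ} (hq : 0 ≤ q) (hfar : 7 / 2 ≤ q * cos (θ / 2)) :
    log ‖riemannXiFn (q * Complex.exp ((θ / 2 : ℝ) * Complex.I) + 1 / 2)‖ ≤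
      log 4 + (9 / 4 + q * cos (θ / 2) / 2) * log q := by
  have hq' : 7 / 2 ≤ q := by nlinarith [cos_le_one (θ / 2)]
  have hnorm : ‖(q : ℂ) * Complex.exp ((θ / 2 : ℝ) * Complex.I)‖ = q := by
    rw [norm_mul, Complex.norm_exp_ofReal_mul_I, Complex.norm_real, Real.norm_of_nonneg hq,
      mul_one]
  have hre : ((q : ℂ) * Complex.exp ((θ / 2 : ℝ) * Complex.I) + 1 / 2).re =
      q * cos (θ / 2) + 1 / 2 := by
    simp only [Complex.add_re, Complex.mul_re, Complex.ofReal_re, Complex.ofReal_im,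
      Complex.exp_ofReal_mul_I_re, zero_mul, sub_zero]
    norm_num
  have h := log_norm_riemannXiFn_le (q := q) (by rw [hre]; linarith)
    ((norm_add_le _ _).trans (by rw [hnorm]; norm_num; linarith))
    (by rw [add_sub_assoc]; exact (norm_add_le _ _).trans (by rw [hnorm]; norm_num; linarith))
  rw [hre] at h
  linear_combination h

theorem eventually_le_mul_sqrt_mul_log (a b : ℝ) {ε : ℝ} (hε : 0 < ε) :
    ∀ᶠ r in atTop, a * log r + b ≤ ε * (√r * log r) := by
  filter_upwards [(tendsto_sqrt_atTop.const_mul_atTop hε).eventually_ge_atTop (|a| + |b|),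
    tendsto_log_atTop.eventually_ge_atTop 1] with r hsqrt hlog
  calc a * log r + b ≤ (|a| + |b|) * log r := by
        nlinarith [le_abs_self a, le_abs_self b, abs_nonneg b]
    _ ≤ ε * √r * log r := by gcongr
    _ = ε * (√r * log r) := by ring

theorem xi1_indicator_upper_bound_general (xi1 : ℂ → ℂ)
    (hfe : ∀ s : ℂ, xi1 (s ^ 2) = riemannXiFn (s + 1 / 2)) :
    ∀ θ : ℝ, |θ| < π → ∀ ε > (0 : ℝ), ∃ r₀ : ℝ, ∀ r : ℝ, r₀ ≤ r →
      Real.log ‖xi1 ((r : ℂ) * Complex.exp (Complex.I * (θ : ℂ)))‖ ≤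
        (1 / 4) * Real.sqrt r * Real.log r * Real.cos (θ / 2) +
          ε * (Real.sqrt r * Real.log r) := by
  intro θ hθ ε hε
  have hc : 0 < cos (θ / 2) := cos_pos_of_mem_Ioo
    ⟨by linarith [neg_abs_le θ], by linarith [le_abs_self θ]⟩
  obtain ⟨r₀, hr₀⟩ := eventually_atTop.mp <|
    ((tendsto_sqrt_atTop.atTop_mul_const hc).eventually_ge_atTop (7 / 2)).and <|
      (eventually_le_mul_sqrt_mul_log (9 / 8) (log 4) hε).and (eventually_ge_atTop 0)
  refine ⟨r₀, fun r hr => ?_⟩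
  obtain ⟨hfar, herr, hr0⟩ := hr₀ r hr
  have hsq : ((√r : ℂ) * Complex.exp ((θ / 2 : ℝ) * Complex.I)) ^ 2 =
      r * Complex.exp (Complex.I * θ) := by
    rw [mul_pow, ← Complex.exp_nat_mul, ← Complex.ofReal_pow, sq_sqrt hr0]
    push_cast; ring_nf
  have hray := log_norm_riemannXiFn_ray_le (sqrt_nonneg r) hfar
  rw [log_sqrt hr0] at hray
  rw [← hsq, hfe]
  linear_combination hray + herr

/-- For every real `θ` with `|θ| < π`,
`log|ξ₁(r e^{iθ})| ≤ (1/4)√r (log r) cos(θ/2) + o(√r log r)` as `r → ∞`; equivalently,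
`limsup_{r→∞} log|ξ₁(r e^{iθ})|/(√r log r) ≤ (1/4) cos(θ/2)`. -/
theorem xi1_indicator_upper_bound (xi1 : ℂ → ℂ) (hxi1 : Differentiable ℂ xi1)
    (hfe : ∀ s : ℂ, xi1 (s ^ 2) = riemannXiFn (s + 1 / 2)) :
    ∀ θ : ℝ, |θ| < π → ∀ ε > (0 : ℝ), ∃ r₀ : ℝ, ∀ r : ℝ, r₀ ≤ r →
      Real.log ‖xi1 ((r : ℂ) * Complex.exp (Complex.I * (θ : ℂ)))‖ ≤
        (1 / 4) * Real.sqrt r * Real.log r * Real.cos (θ / 2) +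
          ε * (Real.sqrt r * Real.log r) :=
  xi1_indicator_upper_bound_general xi1 hfe
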